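/- Let w ∈ L^∞(R^3) + L^{3/2,∞}(R^3) satisfy: there exists a decomposition w = w1 + w2 with w1 vanishing at infinity, w2 ∈ L^{3/2,∞}. Let (u_n) be a sequence bounded in H^1(R^3) with ||u_n||_{L^2}^2 = λ for all n, and suppose u_n → 0 strongly in L^p(R^3) for every p ∈ (2,6). Then ∫_{R^3}(w * |u_n|^2)|u_n|^2 dx → 0 as n → ∞. -/

import Mathlib

open MeasureTheory ENNReal NNReal

noncomputable abbrev E3 := EuclideanSpace ℝ (Fin 3)

/-- The weak `L^p` quasi-norm `‖f‖_{L^{p,∞}} = sup_{t>0} t·|{|f|>t}|^{1/p}`. -/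
noncomputable def weakLpNorm (f : E3 → ℝ) (p : ℝ) : ℝ≥0∞ :=
  ⨆ t : ℝ≥0, (t : ℝ≥0∞) * (volume {x | (t : ℝ) < |f x|}) ^ (1 / p)

/-- Membership in `H¹(ℝ³)` (real valued). -/
def InH1 (u : E3 → ℝ) : Prop :=
  MemLp u 2 volume ∧ Differentiable ℝ u ∧ MemLp (fun x => fderiv ℝ u x) 2 volume

/-- The quartic interaction term `∫ (w * |u|²) |u|²`. -/
noncomputable def interaction (w u : E3 → ℝ) : ℝ :=
  ∫ x, (∫ y, w (x - y) * u y ^ 2) * u x ^ 2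

/-- The Hartree energy functional. -/
noncomputable def hartreeEnergy (w u : E3 → ℝ) : ℝ :=
  (1 / 2) * ∫ x, ‖fderiv ℝ u x‖ ^ 2 + (1 / 4) * interaction w u

/-- The ground-state energy `I(λ) = inf {E(u) : u ∈ H¹, ‖u‖₂² = λ}`. -/
noncomputable def groundStateEnergy (w : E3 → ℝ) (lam : ℝ) : ℝ :=
  sInf (hartreeEnergy w '' {u | InH1 u ∧ (∫ x, u x ^ 2) = lam})

private lemma lint3 {α : Type*} [MeasurableSpace α] (μ : Measure α) {f g h : α → ℝ≥0∞}
    (hf : AEMeasurable f μ) (hg : AEMeasurable g μ) (hh : AEMeasurable h μ) :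
    ∫⁻ x, f x * (g x * h x) ∂μ ≤
      (∫⁻ x, f x ^ (2:ℝ) ∂μ) ^ (1/2:ℝ) *
      ((∫⁻ x, g x ^ (4:ℝ) ∂μ) ^ (1/4:ℝ) * (∫⁻ x, h x ^ (4:ℝ) ∂μ) ^ (1/4:ℝ)) := by
  have conj : (2:ℝ).HolderConjugate 2 := Real.HolderConjugate.two_two
  have h1 : ∫⁻ x, f x * (g x * h x) ∂μ ≤
      (∫⁻ x, f x ^ (2:ℝ) ∂μ) ^ (1/2:ℝ) * (∫⁻ x, (g x * h x) ^ (2:ℝ) ∂μ) ^ (1/2:ℝ) :=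
    ENNReal.lintegral_mul_le_Lp_mul_Lq μ conj hf (hg.mul hh)
  refine h1.trans ?_
  gcongr
  have h2 : ∫⁻ x, (g x * h x) ^ (2:ℝ) ∂μ ≤
      (∫⁻ x, (g x ^ (2:ℝ)) ^ (2:ℝ) ∂μ) ^ (1/2:ℝ) * (∫⁻ x, (h x ^ (2:ℝ)) ^ (2:ℝ) ∂μ) ^ (1/2:ℝ) := by
    have hg2 : AEMeasurable (fun x => g x ^ (2:ℝ)) μ :=
      ENNReal.continuous_rpow_const.measurable.comp_aemeasurable hg
    have hh2 : AEMeasurable (fun x => h x ^ (2:ℝ)) μ :=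
      ENNReal.continuous_rpow_const.measurable.comp_aemeasurable hh
    have := ENNReal.lintegral_mul_le_Lp_mul_Lq μ conj hg2 hh2
    calc ∫⁻ x, (g x * h x) ^ (2:ℝ) ∂μ = ∫⁻ x, g x ^ (2:ℝ) * h x ^ (2:ℝ) ∂μ := by
          simp_rw [ENNReal.mul_rpow_of_nonneg _ _ (by norm_num : (0:ℝ) ≤ 2)]
      _ ≤ _ := this
  have e4 : ∀ (k : α → ℝ≥0∞), (∫⁻ x, (k x ^ (2:ℝ)) ^ (2:ℝ) ∂μ) = ∫⁻ x, k x ^ (4:ℝ) ∂μ := by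
    intro k; simp_rw [← ENNReal.rpow_mul]; norm_num
  rw [e4, e4] at h2
  calc (∫⁻ x, (g x * h x) ^ (2:ℝ) ∂μ) ^ (1/2:ℝ)
      ≤ ((∫⁻ x, g x ^ (4:ℝ) ∂μ) ^ (1/2:ℝ) * (∫⁻ x, h x ^ (4:ℝ) ∂μ) ^ (1/2:ℝ)) ^ (1/2:ℝ) := by
        gcongr
    _ = (∫⁻ x, g x ^ (4:ℝ) ∂μ) ^ (1/4:ℝ) * (∫⁻ x, h x ^ (4:ℝ) ∂μ) ^ (1/4:ℝ) := by
        rw [ENNReal.mul_rpow_of_nonneg _ _ (by norm_num : (0:ℝ) ≤ 1/2), ← ENNReal.rpow_mul,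
          ← ENNReal.rpow_mul]
        norm_num

private lemma young_bound (G v : E3 → ℝ≥0∞) (hG : Measurable G) (hv : Measurable v) :
    ∫⁻ x, (∫⁻ y, G (x - y) * v y) * v x ≤
      ((∫⁻ z, G z ^ (4/3:ℝ)) * (∫⁻ z, v z ^ (4/3:ℝ))) ^ (1/2:ℝ) *
      (((∫⁻ z, G z ^ (4/3:ℝ)) * (∫⁻ z, v z ^ (2:ℝ))) ^ (1/4:ℝ) *
       ((∫⁻ z, v z ^ (4/3:ℝ)) * (∫⁻ z, v z ^ (2:ℝ))) ^ (1/4:ℝ)) := by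
  have hsub : Measurable fun p : E3 × E3 => p.1 - p.2 := measurable_fst.sub measurable_snd
  have hGp : Measurable fun p : E3 × E3 => G (p.1 - p.2) := hG.comp hsub
  have hv1 : Measurable fun p : E3 × E3 => v p.1 := hv.comp measurable_fst
  have hv2 : Measurable fun p : E3 × E3 => v p.2 := hv.comp measurable_snd
  have hrp : ∀ (c : ℝ) (k : E3 × E3 → ℝ≥0∞), Measurable k →
      Measurable fun p => k p ^ c := fun c k hk =>
    ENNReal.continuous_rpow_const.measurable.comp hk
  -- rewrite as a product-measure integral
  have step1 : ∫⁻ x, (∫⁻ y, G (x - y) * v y) * v x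
      = ∫⁻ p : E3 × E3, G (p.1 - p.2) * v p.2 * v p.1 ∂(volume.prod volume) := by
    have e : ∀ x, (∫⁻ y, G (x - y) * v y) * v x = ∫⁻ y, G (x - y) * v y * v x := fun x =>
      (lintegral_mul_const _ ((hG.comp (measurable_const.sub measurable_id)).mul hv)).symm
    simp_rw [e]
    exact (lintegral_prod _ ((hGp.mul hv2).mul hv1).aemeasurable).symm
  -- pointwise factorization
  have key : ∀ a b c : ℝ≥0∞, a * b * c =
      (a ^ (4/3:ℝ) * b ^ (4/3:ℝ)) ^ (1/2:ℝ) *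
      ((a ^ (4/3:ℝ) * c ^ (2:ℝ)) ^ (1/4:ℝ) * (b ^ (4/3:ℝ) * c ^ (2:ℝ)) ^ (1/4:ℝ)) := by
    intro a b c
    have mr : ∀ (x y : ℝ≥0∞) (s : ℝ), 0 ≤ s → (x * y) ^ s = x ^ s * y ^ s := fun x y s hs =>
      ENNReal.mul_rpow_of_nonneg x y hs
    rw [mr _ _ _ (by norm_num : (0:ℝ) ≤ 1/2), mr _ _ _ (by norm_num : (0:ℝ) ≤ 1/4),
      mr _ _ _ (by norm_num : (0:ℝ) ≤ 1/4), ← ENNReal.rpow_mul a, ← ENNReal.rpow_mul b,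
      ← ENNReal.rpow_mul a, ← ENNReal.rpow_mul c, ← ENNReal.rpow_mul b]
    norm_num
    have ha : a = a ^ (2/3:ℝ) * a ^ (3:ℝ)⁻¹ := by
      rw [← ENNReal.rpow_add_of_nonneg _ _ (by norm_num) (by norm_num)]; norm_num
    have hb : b = b ^ (2/3:ℝ) * b ^ (3:ℝ)⁻¹ := by
      rw [← ENNReal.rpow_add_of_nonneg _ _ (by norm_num) (by norm_num)]; norm_num
    have hc : c = c ^ (2⁻¹:ℝ) * c ^ (2⁻¹:ℝ) := by
      rw [← ENNReal.rpow_add_of_nonneg _ _ (by norm_num) (by norm_num)]; norm_num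
    conv_lhs => rw [ha, hb, hc]
    ring
  have half : ∀ X : ℝ≥0∞, (X ^ (1/2:ℝ)) ^ (2:ℝ) = X := fun X => by
    rw [← ENNReal.rpow_mul]; norm_num
  have quarter : ∀ X : ℝ≥0∞, (X ^ (1/4:ℝ)) ^ (4:ℝ) = X := fun X => by
    rw [← ENNReal.rpow_mul]; norm_num
  have hGr : Measurable fun p : E3 × E3 => G (p.1 - p.2) ^ (4/3:ℝ) :=
    ENNReal.continuous_rpow_const.measurable.comp hGp
  have hv2r : Measurable fun p : E3 × E3 => v p.2 ^ (4/3:ℝ) :=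
    ENNReal.continuous_rpow_const.measurable.comp hv2
  have hv1r : Measurable fun p : E3 × E3 => v p.1 ^ (2:ℝ) :=
    ENNReal.continuous_rpow_const.measurable.comp hv1
  have hvr : Measurable fun z : E3 => v z ^ (4/3:ℝ) :=
    ENNReal.continuous_rpow_const.measurable.comp hv
  have hvr2 : Measurable fun z : E3 => v z ^ (2:ℝ) :=
    ENNReal.continuous_rpow_const.measurable.comp hv
  have T1 : ∫⁻ p : E3 × E3, G (p.1 - p.2) ^ (4/3:ℝ) * v p.2 ^ (4/3:ℝ) ∂(volume.prod volume)
      = (∫⁻ z, G z ^ (4/3:ℝ)) * (∫⁻ z, v z ^ (4/3:ℝ)) := by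
    rw [lintegral_prod_symm (fun p : E3 × E3 => G (p.1 - p.2) ^ (4/3:ℝ) * v p.2 ^ (4/3:ℝ)) (hGr.mul hv2r).aemeasurable]
    have e1 : ∀ y : E3, (∫⁻ x, G (x - y) ^ (4/3:ℝ) * v y ^ (4/3:ℝ))
        = (∫⁻ z, G z ^ (4/3:ℝ)) * v y ^ (4/3:ℝ) := by
      intro y
      rw [lintegral_mul_const _ (by fun_prop : Measurable fun x : E3 => G (x - y) ^ (4/3:ℝ))]
      congr 1
      exact lintegral_sub_right_eq_self (fun z => G z ^ (4/3:ℝ)) y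
    simp_rw [e1]
    exact lintegral_const_mul _ hvr
  have T2 : ∫⁻ p : E3 × E3, G (p.1 - p.2) ^ (4/3:ℝ) * v p.1 ^ (2:ℝ) ∂(volume.prod volume)
      = (∫⁻ z, G z ^ (4/3:ℝ)) * (∫⁻ z, v z ^ (2:ℝ)) := by
    rw [lintegral_prod (fun p : E3 × E3 => G (p.1 - p.2) ^ (4/3:ℝ) * v p.1 ^ (2:ℝ)) (hGr.mul hv1r).aemeasurable]
    have e2 : ∀ x : E3, (∫⁻ y, G (x - y) ^ (4/3:ℝ) * v x ^ (2:ℝ))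
        = (∫⁻ z, G z ^ (4/3:ℝ)) * v x ^ (2:ℝ) := by
      intro x
      rw [lintegral_mul_const _ (by fun_prop : Measurable fun y : E3 => G (x - y) ^ (4/3:ℝ))]
      congr 1
      exact (Measure.measurePreserving_sub_left volume x).lintegral_comp_emb
        (MeasurableEquiv.subLeft x).measurableEmbedding (fun z => G z ^ (4/3:ℝ))
    simp_rw [e2]
    exact lintegral_const_mul _ hvr2
  have T3 : ∫⁻ p : E3 × E3, v p.2 ^ (4/3:ℝ) * v p.1 ^ (2:ℝ) ∂(volume.prod volume)
      = (∫⁻ z, v z ^ (4/3:ℝ)) * (∫⁻ z, v z ^ (2:ℝ)) := by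
    rw [lintegral_prod (fun p : E3 × E3 => v p.2 ^ (4/3:ℝ) * v p.1 ^ (2:ℝ)) (hv2r.mul hv1r).aemeasurable]
    have e3 : ∀ x : E3, (∫⁻ y, v y ^ (4/3:ℝ) * v x ^ (2:ℝ))
        = (∫⁻ z, v z ^ (4/3:ℝ)) * v x ^ (2:ℝ) := fun x => lintegral_mul_const _ hvr
    simp_rw [e3]
    exact lintegral_const_mul _ hvr2
  rw [step1]
  calc ∫⁻ p : E3 × E3, G (p.1 - p.2) * v p.2 * v p.1 ∂(volume.prod volume)
      = ∫⁻ p : E3 × E3, (G (p.1 - p.2) ^ (4/3:ℝ) * v p.2 ^ (4/3:ℝ)) ^ (1/2:ℝ) *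
          ((G (p.1 - p.2) ^ (4/3:ℝ) * v p.1 ^ (2:ℝ)) ^ (1/4:ℝ) *
           (v p.2 ^ (4/3:ℝ) * v p.1 ^ (2:ℝ)) ^ (1/4:ℝ)) ∂(volume.prod volume) :=
        lintegral_congr fun p => key _ _ _
    _ ≤ (∫⁻ p : E3 × E3, ((G (p.1 - p.2) ^ (4/3:ℝ) * v p.2 ^ (4/3:ℝ)) ^ (1/2:ℝ)) ^ (2:ℝ)
            ∂(volume.prod volume)) ^ (1/2:ℝ) *
        ((∫⁻ p : E3 × E3, ((G (p.1 - p.2) ^ (4/3:ℝ) * v p.1 ^ (2:ℝ)) ^ (1/4:ℝ)) ^ (4:ℝ)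
            ∂(volume.prod volume)) ^ (1/4:ℝ) *
         (∫⁻ p : E3 × E3, ((v p.2 ^ (4/3:ℝ) * v p.1 ^ (2:ℝ)) ^ (1/4:ℝ)) ^ (4:ℝ)
            ∂(volume.prod volume)) ^ (1/4:ℝ)) :=
        lint3 _ (ENNReal.continuous_rpow_const.measurable.comp (hGr.mul hv2r)).aemeasurable
          (ENNReal.continuous_rpow_const.measurable.comp (hGr.mul hv1r)).aemeasurable
          (ENNReal.continuous_rpow_const.measurable.comp (hv2r.mul hv1r)).aemeasurable
    _ = _ := by simp_rw [half, quarter]; rw [T1, T2, T3]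

private lemma dyadic_ex {d s : ℝ} (hd : 0 < d) (hs : d < s) :
    ∃ k : ℕ, d * 2 ^ k < s ∧ s ≤ d * 2 ^ (k + 1) := by
  have hex : ∃ n : ℕ, s ≤ d * 2 ^ n := by
    obtain ⟨n, hn⟩ := pow_unbounded_of_one_lt (s / d) one_lt_two
    rw [div_lt_iff₀ hd] at hn
    exact ⟨n, by nlinarith⟩
  classical
  have hN : s ≤ d * 2 ^ (Nat.find hex) := Nat.find_spec hex
  have hN0 : Nat.find hex ≠ 0 := by
    intro h
    rw [h] at hN; simp at hN; linarith
  refine ⟨Nat.find hex - 1, ?_, ?_⟩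
  · have := Nat.find_min hex (Nat.pred_lt hN0)
    exact not_le.1 this
  · rw [Nat.sub_add_cancel (Nat.one_le_iff_ne_zero.2 hN0)]; exact hN

private lemma bdd_trunc_finite (W1 : E3 → ℝ) (M : ℝ≥0∞) (hM : M < ⊤)
    (hae : ∀ᵐ z ∂(volume : Measure E3), ((‖W1 z‖₊ : ℝ≥0∞)) ≤ M)
    (S : Set E3) (hS : MeasurableSet S) (hSfin : volume S < ⊤) :
    ∫⁻ z, (S.indicator (fun z => ((‖W1 z‖₊ : ℝ≥0∞))) z) ^ (4/3:ℝ) < ⊤ := by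
  have hb : ∀ᵐ z ∂(volume : Measure E3),
      (S.indicator (fun z => ((‖W1 z‖₊ : ℝ≥0∞))) z) ^ (4/3:ℝ)
        ≤ S.indicator (fun _ => M ^ (4/3:ℝ)) z := by
    filter_upwards [hae] with z hz
    by_cases hzS : z ∈ S
    · rw [Set.indicator_of_mem hzS, Set.indicator_of_mem hzS]
      exact ENNReal.rpow_le_rpow hz (by norm_num)
    · rw [Set.indicator_of_notMem hzS, Set.indicator_of_notMem hzS,
        ENNReal.zero_rpow_of_pos (by norm_num)]
  refine lt_of_le_of_lt (lintegral_mono_ae hb) ?_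
  rw [lintegral_indicator hS, setLIntegral_const]
  exact ENNReal.mul_lt_top (ENNReal.rpow_lt_top_of_nonneg (by norm_num) hM.ne) hSfin

private lemma weak_trunc_finite (W2 : E3 → ℝ) (hm : Measurable W2) (M : ℝ≥0∞) (hM : M < ⊤)
    (hbound : ∀ t : ℝ≥0, 0 < t → volume {z : E3 | (t:ℝ) < |W2 z|} ≤ (M / t) ^ (3/2:ℝ))
    (δ : ℝ≥0) (hδ : 0 < δ) :
    ∫⁻ z, ({z : E3 | (δ:ℝ) < |W2 z|}.indicator (fun z => ((‖W2 z‖₊ : ℝ≥0∞))) z) ^ (4/3:ℝ) < ⊤ := by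
  classical
  set T : ℕ → Set E3 := fun k => {z : E3 | ((δ:ℝ) * 2 ^ k) < |W2 z|} with hT
  have hTm : ∀ k, MeasurableSet (T k) := fun k => measurableSet_lt measurable_const hm.abs
  have hδ0 : ((δ:ℝ≥0∞)) ≠ 0 := by exact_mod_cast hδ.ne'
  have hvol : ∀ k, volume (T k) ≤ (M / ((δ:ℝ≥0∞) * 2 ^ k)) ^ (3/2:ℝ) := by
    intro k
    have h1 := hbound (δ * 2 ^ k) (by positivity)
    have e2 : ((δ * 2 ^ k : ℝ≥0) : ℝ≥0∞) = (δ:ℝ≥0∞) * 2 ^ k := by push_cast; ring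
    have e3 : ((δ * 2 ^ k : ℝ≥0):ℝ) = (δ:ℝ) * 2 ^ k := by push_cast; ring
    rw [e3, e2] at h1
    exact h1
  set c : ℕ → ℝ≥0∞ := fun k => ((δ:ℝ≥0∞) * 2 ^ (k+1)) ^ (4/3:ℝ) with hc
  have hpt : ∀ z, ({z : E3 | (δ:ℝ) < |W2 z|}.indicator (fun z => ((‖W2 z‖₊ : ℝ≥0∞))) z) ^ (4/3:ℝ)
      ≤ ∑' k, (T k).indicator (fun _ => c k) z := by
    intro z
    by_cases hz : z ∈ {z : E3 | (δ:ℝ) < |W2 z|}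
    · obtain ⟨k, hk1, hk2⟩ := dyadic_ex (by exact_mod_cast hδ : (0:ℝ) < (δ:ℝ)) hz
      have hzT : z ∈ T k := hk1
      refine le_trans ?_ (ENNReal.le_tsum k)
      rw [Set.indicator_of_mem hz, Set.indicator_of_mem hzT]
      refine ENNReal.rpow_le_rpow ?_ (by norm_num)
      rw [← enorm_eq_nnnorm, Real.enorm_eq_ofReal_abs]
      calc ENNReal.ofReal |W2 z| ≤ ENNReal.ofReal ((δ:ℝ) * 2 ^ (k+1)) :=
            ENNReal.ofReal_le_ofReal hk2
        _ = (δ:ℝ≥0∞) * 2 ^ (k+1) := by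
            rw [ENNReal.ofReal_mul (NNReal.coe_nonneg δ), ENNReal.ofReal_coe_nnreal]
            congr 1
            rw [ENNReal.ofReal_pow (by norm_num)]
            norm_num
    · rw [Set.indicator_of_notMem hz, ENNReal.zero_rpow_of_pos (by norm_num)]
      exact zero_le
  have hsum : ∫⁻ z, ∑' k, (T k).indicator (fun _ => c k) z = ∑' k, c k * volume (T k) := by
    rw [lintegral_tsum (fun k => ((measurable_const.indicator (hTm k)).aemeasurable))]
    congr 1; funext k
    rw [lintegral_indicator (hTm k), setLIntegral_const]
  refine lt_of_le_of_lt (lintegral_mono hpt) ?_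
  rw [hsum]
  set ub : ℕ → ℝ≥0∞ := fun k => c k * (M / ((δ:ℝ≥0∞) * 2 ^ k)) ^ (3/2:ℝ) with hub
  have hle : ∑' k, c k * volume (T k) ≤ ∑' k, ub k :=
    ENNReal.tsum_le_tsum (fun k => mul_le_mul_right (hvol k) _)
  set r : ℝ≥0∞ := (2:ℝ≥0∞) ^ (-(1/6):ℝ) with hr
  have hrval : (2:ℝ≥0∞) ^ (4/3:ℝ) * (2⁻¹ : ℝ≥0∞) ^ (3/2:ℝ) = r := by
    rw [← ENNReal.rpow_neg_one (2:ℝ≥0∞), ← ENNReal.rpow_mul,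
      ← ENNReal.rpow_add _ _ (by norm_num) (by norm_num)]
    norm_num [hr]
  have hstep : ∀ k, ub (k+1) = r * ub k := by
    intro k
    have hx0 : ((δ:ℝ≥0∞) * 2 ^ k) ≠ 0 :=
      mul_ne_zero hδ0 (pow_ne_zero _ (by norm_num))
    have hc1 : c (k+1) = (2:ℝ≥0∞) ^ (4/3:ℝ) * c k := by
      show ((δ:ℝ≥0∞) * 2 ^ (k+1+1)) ^ (4/3:ℝ)
          = (2:ℝ≥0∞) ^ (4/3:ℝ) * ((δ:ℝ≥0∞) * 2 ^ (k+1)) ^ (4/3:ℝ)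
      rw [show ((δ:ℝ≥0∞) * 2 ^ (k+1+1)) = 2 * ((δ:ℝ≥0∞) * 2 ^ (k+1)) by ring,
        ENNReal.mul_rpow_of_nonneg _ _ (by norm_num : (0:ℝ) ≤ 4/3)]
    have hd1 : (M / ((δ:ℝ≥0∞) * 2 ^ (k+1))) ^ (3/2:ℝ)
        = (2⁻¹ : ℝ≥0∞) ^ (3/2:ℝ) * (M / ((δ:ℝ≥0∞) * 2 ^ k)) ^ (3/2:ℝ) := by
      have e1 : M / ((δ:ℝ≥0∞) * 2 ^ (k+1)) = (M / ((δ:ℝ≥0∞) * 2 ^ k)) * 2⁻¹ := by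
        rw [div_eq_mul_inv, div_eq_mul_inv]
        have : ((δ:ℝ≥0∞) * 2 ^ (k+1)) = ((δ:ℝ≥0∞) * 2 ^ k) * 2 := by ring
        rw [this, ENNReal.mul_inv (Or.inl hx0) (Or.inr (by norm_num)), mul_assoc]
      rw [e1, ENNReal.mul_rpow_of_nonneg _ _ (by norm_num : (0:ℝ) ≤ 3/2), mul_comm]
    have lhs : ub (k+1) = c (k+1) * (M / ((δ:ℝ≥0∞) * 2 ^ (k+1))) ^ (3/2:ℝ) := rfl
    have rhs : ub k = c k * (M / ((δ:ℝ≥0∞) * 2 ^ k)) ^ (3/2:ℝ) := rfl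
    rw [lhs, rhs, hc1, hd1, ← hrval]
    ring
  have hgeom : ∀ k, ub k = ub 0 * r ^ k := by
    intro k
    induction k with
    | zero => simp
    | succ k ih => rw [hstep k, ih, pow_succ]; ring
  have hsum2 : ∑' k, ub k = ub 0 * (1 - r)⁻¹ := by
    rw [tsum_congr hgeom, ENNReal.tsum_mul_left, ENNReal.tsum_geometric]
  refine lt_of_le_of_lt hle ?_
  rw [hsum2]
  have hub0 : ub 0 < ⊤ := by
    refine ENNReal.mul_lt_top ?_ ?_
    · exact ENNReal.rpow_lt_top_of_nonneg (by norm_num)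
        (ENNReal.mul_ne_top ENNReal.coe_ne_top (by norm_num))
    · exact ENNReal.rpow_lt_top_of_nonneg (by norm_num)
        (ENNReal.div_lt_top hM.ne (mul_ne_zero hδ0 (pow_ne_zero _ (by norm_num)))).ne
  have hr1 : r < 1 := by
    rw [hr]
    have : (2:ℝ≥0∞) ^ (-(1/6):ℝ) = ((2:ℝ≥0∞) ^ ((1/6):ℝ))⁻¹ := by
      rw [← ENNReal.rpow_neg]
    rw [this]
    refine ENNReal.inv_lt_one.2 ?_
    refine ENNReal.one_lt_rpow (by norm_num) (by norm_num)
  refine ENNReal.mul_lt_top hub0 ?_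
  exact ENNReal.inv_lt_top.2 (tsub_pos_iff_lt.2 hr1)

private lemma interaction_enorm_le (w f : E3 → ℝ) :
    (‖interaction w f‖₊ : ℝ≥0∞) ≤
      ∫⁻ x, (∫⁻ y, (‖w (x-y)‖₊ : ℝ≥0∞) * (‖f y‖₊ : ℝ≥0∞) ^ (2:ℝ)) * (‖f x‖₊ : ℝ≥0∞) ^ (2:ℝ) := by
  have sq : ∀ a : ℝ, (‖a ^ 2‖₊ : ℝ≥0∞) = (‖a‖₊ : ℝ≥0∞) ^ (2:ℝ) := fun a => by
    rw [nnnorm_pow, ENNReal.coe_pow, ← ENNReal.rpow_natCast]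
    norm_num
  refine le_trans (enorm_integral_le_lintegral_enorm _) (lintegral_mono fun x => ?_)
  rw [enorm_eq_nnnorm, nnnorm_mul, ENNReal.coe_mul, sq (f x)]
  refine mul_le_mul' ?_ le_rfl
  refine le_trans (enorm_integral_le_lintegral_enorm _) (lintegral_mono fun y => ?_)
  rw [enorm_eq_nnnorm, nnnorm_mul, ENNReal.coe_mul, sq (f y)]


/-- If `w = w₁ + w₂` with `w₁ ∈ L^∞` vanishing at infinity and `w₂ ∈ L^{3/2,∞}`, and `(u_n)`
is bounded in `H¹(ℝ³)` with fixed mass `λ` and `u_n → 0` in `L^p` for all `2 < p < 6`, then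
`∫ (w * |u_n|²)|u_n|² → 0`. -/
theorem stmt_9 (w w1 w2 : E3 → ℝ) (hsplit : w = w1 + w2)
    (hw1 : MemLp w1 ∞ volume)
    (hw1van : Filter.Tendsto w1 (Filter.cocompact E3) (nhds 0))
    (hw2m : AEStronglyMeasurable w2 volume) (hw2 : weakLpNorm w2 (3 / 2) < ∞)
    (lam : ℝ) (u : ℕ → E3 → ℝ)
    (huH1 : ∀ n, InH1 (u n))
    (hbdd : ∃ C : ℝ, ∀ n,
      (∫ x, u n x ^ 2) + (∫ x, ‖fderiv ℝ (u n) x‖ ^ 2) ≤ C)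
    (hmass : ∀ n, (∫ x, u n x ^ 2) = lam)
    (hvan : ∀ p : ℝ, 2 < p → p < 6 →
      Filter.Tendsto (fun n => eLpNorm (u n) (ENNReal.ofReal p) volume)
        Filter.atTop (nhds 0)) :
    Filter.Tendsto (fun n => interaction w (u n)) Filter.atTop (nhds 0) := by
  classical
  obtain ⟨hw1sm, hw1fin⟩ := hw1
  set W1 : E3 → ℝ := hw1sm.mk w1 with hW1def
  have hW1m : Measurable W1 := hw1sm.stronglyMeasurable_mk.measurable
  have hW1e : w1 =ᵐ[volume] W1 := hw1sm.ae_eq_mk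
  set W2 : E3 → ℝ := hw2m.mk w2 with hW2def
  have hW2m : Measurable W2 := hw2m.stronglyMeasurable_mk.measurable
  have hW2e : w2 =ᵐ[volume] W2 := hw2m.ae_eq_mk
  have hUsm : ∀ n, AEStronglyMeasurable (u n) volume := fun n => (huH1 n).1.1
  set U : ℕ → E3 → ℝ := fun n => (hUsm n).mk (u n) with hUdef
  have hUm : ∀ n, Measurable (U n) := fun n => (hUsm n).stronglyMeasurable_mk.measurable
  have hUe : ∀ n, u n =ᵐ[volume] U n := fun n => (hUsm n).ae_eq_mk
  set v : ℕ → E3 → ℝ≥0∞ := fun n x => (‖U n x‖₊ : ℝ≥0∞) ^ (2:ℝ) with hvdef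
  have hvm : ∀ n, Measurable (v n) := fun n =>
    ENNReal.continuous_rpow_const.measurable.comp (hUm n).nnnorm.coe_nnreal_ennreal
  have hvu : ∀ n, (fun y => ((‖u n y‖₊ : ℝ≥0∞)) ^ (2:ℝ)) =ᵐ[volume] v n := fun n =>
    (hUe n).mono fun y hy => by rw [hvdef]; simp only [hy]
  -- mass identity
  have hlam : 0 ≤ lam := (hmass 0) ▸ integral_nonneg fun x => sq_nonneg _
  have hL : ∀ n, ∫⁻ x, v n x = ENNReal.ofReal lam := by
    intro n
    have e1 : ∀ a : ℝ, ((‖a‖₊ : ℝ≥0∞)) ^ (2:ℝ) = ENNReal.ofReal (a ^ 2) := fun a => by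
      rw [← enorm_eq_nnnorm, Real.enorm_eq_ofReal_abs,
        ENNReal.ofReal_rpow_of_nonneg (abs_nonneg a) (by norm_num : (0:ℝ) ≤ 2)]
      congr 1
      rw [show (2:ℝ) = ((2:ℕ):ℝ) by norm_num, Real.rpow_natCast, sq_abs]
    calc ∫⁻ x, v n x = ∫⁻ x, ((‖u n x‖₊ : ℝ≥0∞)) ^ (2:ℝ) :=
          lintegral_congr_ae (hvu n).symm
      _ = ∫⁻ x, ENNReal.ofReal (u n x ^ 2) := by simp_rw [e1]
      _ = ENNReal.ofReal (∫ x, u n x ^ 2) :=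
          (ofReal_integral_eq_lintegral_ofReal ((huH1 n).1.integrable_sq)
            (Filter.Eventually.of_forall fun x => sq_nonneg _)).symm
      _ = ENNReal.ofReal lam := by rw [hmass n]
  -- vanishing of Lp masses
  have key : ∀ p : ℝ, 2 < p → p < 6 →
      Filter.Tendsto (fun n => ∫⁻ x, ((‖u n x‖₊ : ℝ≥0∞)) ^ p) Filter.atTop (nhds 0) := by
    intro p hp2 hp6
    have hp0 : (0:ℝ) < p := by linarith
    have heq : ∀ n, ∫⁻ x, ((‖u n x‖₊ : ℝ≥0∞)) ^ p
        = (eLpNorm (u n) (ENNReal.ofReal p) volume) ^ p := by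
      intro n
      rw [eLpNorm_eq_lintegral_rpow_enorm_toReal (by simp [ENNReal.ofReal_eq_zero]; linarith)
        ENNReal.ofReal_ne_top, ENNReal.toReal_ofReal hp0.le, one_div,
        ENNReal.rpow_inv_rpow hp0.ne']
      rfl
    simp_rw [heq]
    have := (hvan p hp2 hp6).ennrpow_const p
    rwa [ENNReal.zero_rpow_of_pos hp0] at this
  have hB : Filter.Tendsto (fun n => ∫⁻ x, v n x ^ ((4:ℝ)/3)) Filter.atTop (nhds 0) := by
    have e : ∀ n, ∫⁻ x, v n x ^ ((4:ℝ)/3) = ∫⁻ x, ((‖u n x‖₊ : ℝ≥0∞)) ^ ((8:ℝ)/3) := by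
      intro n
      apply lintegral_congr_ae
      filter_upwards [hUe n] with x hx
      rw [hvdef]
      simp only [← hx]
      rw [← ENNReal.rpow_mul]
      norm_num
    simp_rw [e]
    exact key ((8:ℝ)/3) (by norm_num) (by norm_num)
  have hC : Filter.Tendsto (fun n => ∫⁻ x, v n x ^ (2:ℝ)) Filter.atTop (nhds 0) := by
    have e : ∀ n, ∫⁻ x, v n x ^ (2:ℝ) = ∫⁻ x, ((‖u n x‖₊ : ℝ≥0∞)) ^ (4:ℝ) := by
      intro n
      apply lintegral_congr_ae
      filter_upwards [hUe n] with x hx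
      rw [hvdef]
      simp only [← hx]
      rw [← ENNReal.rpow_mul]
      norm_num
    simp_rw [e]
    exact key 4 (by norm_num) (by norm_num)
  -- weak L^{3/2} bound for the measurable representative
  have hW2bound : ∀ t : ℝ≥0, 0 < t →
      volume {z : E3 | (t:ℝ) < |W2 z|} ≤ (weakLpNorm w2 (3/2) / t) ^ ((3:ℝ)/2) := by
    intro t ht
    have hsets : volume {z : E3 | (t:ℝ) < |W2 z|} = volume {z : E3 | (t:ℝ) < |w2 z|} := by
      refine measure_congr ?_
      refine Filter.eventuallyEq_set.2 ?_
      filter_upwards [hW2e] with z hz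
      simp only [Set.mem_setOf_eq, hz]
    have hsup : (t : ℝ≥0∞) * (volume {x : E3 | (t:ℝ) < |w2 x|}) ^ (1 / (3/2 : ℝ))
        ≤ weakLpNorm w2 (3/2) :=
      le_iSup (fun s : ℝ≥0 => (s : ℝ≥0∞) * (volume {x : E3 | (s:ℝ) < |w2 x|}) ^ (1 / (3/2 : ℝ))) t
    rw [show (1 / (3/2 : ℝ)) = (2:ℝ)/3 by norm_num] at hsup
    have h23 : (volume {x : E3 | (t:ℝ) < |w2 x|}) ^ ((2:ℝ)/3) ≤ weakLpNorm w2 (3/2) / t := by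
      rw [ENNReal.le_div_iff_mul_le (Or.inl (by exact_mod_cast ht.ne')) (Or.inl ENNReal.coe_ne_top)]
      rw [mul_comm]
      exact hsup
    rw [hsets]
    calc volume {x : E3 | (t:ℝ) < |w2 x|}
        = ((volume {x : E3 | (t:ℝ) < |w2 x|}) ^ ((2:ℝ)/3)) ^ ((3:ℝ)/2) := by
          rw [← ENNReal.rpow_mul]; norm_num
      _ ≤ (weakLpNorm w2 (3/2) / t) ^ ((3:ℝ)/2) :=
          ENNReal.rpow_le_rpow h23 (by norm_num)
  -- the ε-argument
  rw [NormedAddCommGroup.tendsto_nhds_zero]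
  intro ε hε
  set dr : ℝ := ε / (8 * (lam ^ 2 + 1)) with hdrdef
  have hdrpos : 0 < dr := by positivity
  set δ : ℝ≥0 := dr.toNNReal with hδdef
  have hδpos : 0 < δ := Real.toNNReal_pos.2 hdrpos
  have hδcoe : (δ:ℝ) = dr := Real.coe_toNNReal _ hdrpos.le
  -- truncations
  set S1 : Set E3 := {z : E3 | (δ:ℝ) < |W1 z|} with hS1def
  set S2 : Set E3 := {z : E3 | (δ:ℝ) < |W2 z|} with hS2def
  have hS1m : MeasurableSet S1 := measurableSet_lt measurable_const hW1m.abs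
  have hS2m : MeasurableSet S2 := measurableSet_lt measurable_const hW2m.abs
  set G1 : E3 → ℝ≥0∞ := S1.indicator (fun z => ((‖W1 z‖₊ : ℝ≥0∞))) with hG1def
  set G2 : E3 → ℝ≥0∞ := S2.indicator (fun z => ((‖W2 z‖₊ : ℝ≥0∞))) with hG2def
  have hG1m : Measurable G1 := (hW1m.nnnorm.coe_nnreal_ennreal).indicator hS1m
  have hG2m : Measurable G2 := (hW2m.nnnorm.coe_nnreal_ennreal).indicator hS2m
  have hb1 : ∀ t, (‖W1 t‖₊ : ℝ≥0∞) ≤ (δ : ℝ≥0∞) + G1 t := by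
    intro t
    by_cases ht : t ∈ S1
    · rw [hG1def, Set.indicator_of_mem ht]; exact le_add_self
    · rw [hG1def, Set.indicator_of_notMem ht, add_zero]
      have h1 : |W1 t| ≤ (δ:ℝ) := not_lt.1 ht
      rw [← enorm_eq_nnnorm, Real.enorm_eq_ofReal_abs]
      calc ENNReal.ofReal |W1 t| ≤ ENNReal.ofReal (δ:ℝ) := ENNReal.ofReal_le_ofReal h1
        _ = (δ : ℝ≥0∞) := ENNReal.ofReal_coe_nnreal
  have hb2 : ∀ t, (‖W2 t‖₊ : ℝ≥0∞) ≤ (δ : ℝ≥0∞) + G2 t := by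
    intro t
    by_cases ht : t ∈ S2
    · rw [hG2def, Set.indicator_of_mem ht]; exact le_add_self
    · rw [hG2def, Set.indicator_of_notMem ht, add_zero]
      have h1 : |W2 t| ≤ (δ:ℝ) := not_lt.1 ht
      rw [← enorm_eq_nnnorm, Real.enorm_eq_ofReal_abs]
      calc ENNReal.ofReal |W2 t| ≤ ENNReal.ofReal (δ:ℝ) := ENNReal.ofReal_le_ofReal h1
        _ = (δ : ℝ≥0∞) := ENNReal.ofReal_coe_nnreal
  set L : ℝ≥0∞ := ENNReal.ofReal lam with hLdef
  set c2 : ℝ≥0∞ := (δ : ℝ≥0∞) + (δ : ℝ≥0∞) with hc2def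
  set Y1 : ℕ → ℝ≥0∞ := fun n => ∫⁻ x, (∫⁻ y, G1 (x - y) * v n y) * v n x with hY1def
  set Y2 : ℕ → ℝ≥0∞ := fun n => ∫⁻ x, (∫⁻ y, G2 (x - y) * v n y) * v n x with hY2def
  -- the main pointwise/integral estimate
  have hJ : ∀ n, (‖interaction w (u n)‖₊ : ℝ≥0∞) ≤ c2 * (L * L) + (Y1 n + Y2 n) := by
    intro n
    refine (interaction_enorm_le w (u n)).trans ?_
    have hx_inner : ∀ x : E3,
        (∫⁻ y, (‖w (x - y)‖₊ : ℝ≥0∞) * ((‖u n y‖₊ : ℝ≥0∞)) ^ (2:ℝ))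
          ≤ c2 * L + ((∫⁻ y, G1 (x - y) * v n y) + ∫⁻ y, G2 (x - y) * v n y) := by
      intro x
      have hq : Filter.Tendsto (fun y : E3 => x - y) (ae volume) (ae volume) :=
        (Measure.measurePreserving_sub_left volume x).quasiMeasurePreserving.tendsto_ae
      have hW1c : (fun y : E3 => w1 (x - y)) =ᵐ[volume] (fun y => W1 (x - y)) :=
        hW1e.comp_tendsto hq
      have hW2c : (fun y : E3 => w2 (x - y)) =ᵐ[volume] (fun y => W2 (x - y)) :=
        hW2e.comp_tendsto hq
      have step1 : (∫⁻ y, (‖w (x - y)‖₊ : ℝ≥0∞) * ((‖u n y‖₊ : ℝ≥0∞)) ^ (2:ℝ))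
          ≤ ∫⁻ y, (((δ:ℝ≥0∞) + G1 (x - y)) + ((δ:ℝ≥0∞) + G2 (x - y))) * v n y := by
        refine lintegral_mono_ae ?_
        filter_upwards [hW1c, hW2c, hvu n] with y h1 h2 h3
        have hw_le : (‖w (x - y)‖₊ : ℝ≥0∞)
            ≤ ((δ:ℝ≥0∞) + G1 (x - y)) + ((δ:ℝ≥0∞) + G2 (x - y)) := by
          have : (‖w (x - y)‖₊ : ℝ≥0∞) ≤ (‖w1 (x - y)‖₊ : ℝ≥0∞) + (‖w2 (x - y)‖₊ : ℝ≥0∞) := by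
            rw [hsplit]
            simp only [Pi.add_apply]
            exact_mod_cast nnnorm_add_le _ _
          refine this.trans ?_
          rw [h1, h2]
          exact add_le_add (hb1 _) (hb2 _)
        calc (‖w (x - y)‖₊ : ℝ≥0∞) * ((‖u n y‖₊ : ℝ≥0∞)) ^ (2:ℝ)
            = (‖w (x - y)‖₊ : ℝ≥0∞) * v n y := by rw [h3]
          _ ≤ _ := mul_le_mul_left hw_le _
      refine step1.trans (le_of_eq ?_)
      have expand : ∀ y : E3, (((δ:ℝ≥0∞) + G1 (x - y)) + ((δ:ℝ≥0∞) + G2 (x - y))) * v n y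
          = c2 * v n y + (G1 (x - y) * v n y + G2 (x - y) * v n y) := by
        intro y; rw [hc2def]; ring
      simp_rw [expand]
      rw [lintegral_add_left ((hvm n).const_mul c2),
        lintegral_add_left (show Measurable fun y : E3 => G1 (x - y) * v n y from
          (hG1m.comp (measurable_const.sub measurable_id)).mul (hvm n)),
        lintegral_const_mul c2 (hvm n), hL n]
    calc ∫⁻ x, (∫⁻ y, (‖w (x - y)‖₊ : ℝ≥0∞) * ((‖u n y‖₊ : ℝ≥0∞)) ^ (2:ℝ))
            * ((‖u n x‖₊ : ℝ≥0∞)) ^ (2:ℝ)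
        ≤ ∫⁻ x, (c2 * L + ((∫⁻ y, G1 (x - y) * v n y) + ∫⁻ y, G2 (x - y) * v n y))
            * ((‖u n x‖₊ : ℝ≥0∞)) ^ (2:ℝ) :=
          lintegral_mono fun x => mul_le_mul_left (hx_inner x) _
      _ = ∫⁻ x, (c2 * L + ((∫⁻ y, G1 (x - y) * v n y) + ∫⁻ y, G2 (x - y) * v n y)) * v n x :=
          lintegral_congr_ae (Filter.EventuallyEq.mul (Filter.EventuallyEq.rfl) (hvu n))
      _ = c2 * (L * L) + (Y1 n + Y2 n) := by
          have expand2 : ∀ x : E3,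
              (c2 * L + ((∫⁻ y, G1 (x - y) * v n y) + ∫⁻ y, G2 (x - y) * v n y)) * v n x
              = (c2 * L) * v n x + ((∫⁻ y, G1 (x - y) * v n y) * v n x
                  + (∫⁻ y, G2 (x - y) * v n y) * v n x) := by
            intro x; ring
          simp_rw [expand2]
          have hconv1 : Measurable fun x : E3 => ∫⁻ y, G1 (x - y) * v n y :=
            Measurable.lintegral_prod_right
              ((hG1m.comp (measurable_fst.sub measurable_snd)).mul ((hvm n).comp measurable_snd))
          rw [lintegral_add_left (show Measurable fun x : E3 => c2 * L * v n x from
              (hvm n).const_mul _),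
            lintegral_add_left (show Measurable fun x : E3 => (∫⁻ y, G1 (x - y) * v n y) * v n x
              from hconv1.mul (hvm n)),
            lintegral_const_mul _ (hvm n), hL n, mul_assoc]
  -- finiteness of the truncated potentials in L^{4/3}
  have hA1 : (∫⁻ z, G1 z ^ ((4:ℝ)/3)) < ⊤ := by
    have hM : eLpNorm w1 ⊤ volume < ⊤ := hw1fin
    have hae : ∀ᵐ z ∂(volume : Measure E3), ((‖W1 z‖₊ : ℝ≥0∞)) ≤ eLpNorm w1 ⊤ volume := by
      have h1 : ∀ᵐ z ∂(volume : Measure E3), ((‖w1 z‖₊ : ℝ≥0∞)) ≤ eLpNorm w1 ⊤ volume := by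
        rw [eLpNorm_exponent_top]
        exact ae_le_eLpNormEssSup
      filter_upwards [h1, hW1e] with z h1z h2z
      rwa [h2z] at h1z
    have hev : ∀ᶠ x in Filter.cocompact E3, ‖w1 x‖ < (δ:ℝ) := by
      have := hw1van.eventually (Metric.ball_mem_nhds (0:ℝ) (by exact_mod_cast hδpos))
      filter_upwards [this] with x hx
      simpa using hx
    obtain ⟨K, hKc, hKs⟩ := Filter.mem_cocompact.mp hev
    have hsub : {z : E3 | (δ:ℝ) < |w1 z|} ⊆ K := by
      intro z hz
      by_contra hzK
      have : ‖w1 z‖ < (δ:ℝ) := hKs hzK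
      rw [Real.norm_eq_abs] at this
      exact absurd hz (not_lt.2 this.le)
    have hvolS1 : volume S1 < ⊤ := by
      have heqv : volume S1 = volume {z : E3 | (δ:ℝ) < |w1 z|} := by
        refine measure_congr ?_
        refine Filter.eventuallyEq_set.2 ?_
        filter_upwards [hW1e] with z hz
        rw [hS1def]
        simp only [Set.mem_setOf_eq, hz]
      rw [heqv]
      exact lt_of_le_of_lt (measure_mono hsub) hKc.measure_lt_top
    exact bdd_trunc_finite W1 _ hM hae S1 hS1m hvolS1
  have hA2 : (∫⁻ z, G2 z ^ ((4:ℝ)/3)) < ⊤ :=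
    weak_trunc_finite W2 hW2m _ hw2 hW2bound δ hδpos
  -- Young's inequality and convergence of the Y-terms
  have hY : ∀ (G : E3 → ℝ≥0∞), Measurable G → (∫⁻ z, G z ^ ((4:ℝ)/3)) < ⊤ →
      Filter.Tendsto (fun n => ∫⁻ x, (∫⁻ y, G (x - y) * v n y) * v n x)
        Filter.atTop (nhds 0) := by
    intro G hGm hGfin
    have hbnd : ∀ n, (∫⁻ x, (∫⁻ y, G (x - y) * v n y) * v n x) ≤
        ((∫⁻ z, G z ^ ((4:ℝ)/3)) * (∫⁻ z, v n z ^ ((4:ℝ)/3))) ^ ((1:ℝ)/2) *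
        (((∫⁻ z, G z ^ ((4:ℝ)/3)) * (∫⁻ z, v n z ^ (2:ℝ))) ^ ((1:ℝ)/4) *
         ((∫⁻ z, v n z ^ ((4:ℝ)/3)) * (∫⁻ z, v n z ^ (2:ℝ))) ^ ((1:ℝ)/4)) := fun n =>
      young_bound G (v n) hGm (hvm n)
    have hAB : Filter.Tendsto (fun n => (∫⁻ z, G z ^ ((4:ℝ)/3)) * (∫⁻ z, v n z ^ ((4:ℝ)/3)))
        Filter.atTop (nhds 0) := by
      have := ENNReal.Tendsto.const_mul hB (Or.inr hGfin.ne)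
      simpa using this
    have hAC : Filter.Tendsto (fun n => (∫⁻ z, G z ^ ((4:ℝ)/3)) * (∫⁻ z, v n z ^ (2:ℝ)))
        Filter.atTop (nhds 0) := by
      have := ENNReal.Tendsto.const_mul hC (Or.inr hGfin.ne)
      simpa using this
    have hBC : Filter.Tendsto (fun n => (∫⁻ z, v n z ^ ((4:ℝ)/3)) * (∫⁻ z, v n z ^ (2:ℝ)))
        Filter.atTop (nhds 0) := by
      have := ENNReal.Tendsto.mul hB (Or.inr ENNReal.zero_ne_top) hC (Or.inr ENNReal.zero_ne_top)
      simpa using this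
    have h1 := hAB.ennrpow_const ((1:ℝ)/2)
    have h2 := hAC.ennrpow_const ((1:ℝ)/4)
    have h3 := hBC.ennrpow_const ((1:ℝ)/4)
    rw [ENNReal.zero_rpow_of_pos (by norm_num)] at h1 h2 h3
    have h23 := ENNReal.Tendsto.mul h2 (Or.inr ENNReal.zero_ne_top) h3
      (Or.inr ENNReal.zero_ne_top)
    rw [mul_zero] at h23
    have hZ := ENNReal.Tendsto.mul h1 (Or.inr ENNReal.zero_ne_top) h23
      (Or.inr ENNReal.zero_ne_top)
    rw [mul_zero] at hZ
    exact tendsto_of_tendsto_of_tendsto_of_le_of_le tendsto_const_nhds hZ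
      (fun n => zero_le) hbnd
  have hsum : Filter.Tendsto (fun n => Y1 n + Y2 n) Filter.atTop (nhds 0) := by
    have := (hY G1 hG1m hA1).add (hY G2 hG2m hA2)
    simpa using this
  have hev2 : ∀ᶠ n in Filter.atTop, Y1 n + Y2 n < ENNReal.ofReal (ε/2) :=
    hsum.eventually_lt_const (ENNReal.ofReal_pos.2 (by positivity))
  filter_upwards [hev2] with n hn
  have hδ2 : c2 * (L * L) ≤ ENNReal.ofReal (ε/2) := by
    have e1 : c2 = ENNReal.ofReal (dr + dr) := by
      rw [hc2def, ENNReal.ofReal_add hdrpos.le hdrpos.le, ← hδcoe, ENNReal.ofReal_coe_nnreal]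
    have e2 : L * L = ENNReal.ofReal (lam * lam) := by
      rw [hLdef, ENNReal.ofReal_mul hlam]
    rw [e1, e2, ← ENNReal.ofReal_mul (by positivity)]
    refine ENNReal.ofReal_le_ofReal ?_
    rw [hdrdef]
    have hq : (0:ℝ) < lam ^ 2 + 1 := by positivity
    rw [← add_div, div_mul_eq_mul_div,
      div_le_iff₀ (by positivity : (0:ℝ) < 8 * (lam ^ 2 + 1))]
    nlinarith [sq_nonneg lam, hε.le]
  have hfin : (‖interaction w (u n)‖₊ : ℝ≥0∞) < ENNReal.ofReal ε := by
    refine (hJ n).trans_lt ?_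
    calc c2 * (L * L) + (Y1 n + Y2 n)
        < ENNReal.ofReal (ε/2) + ENNReal.ofReal (ε/2) :=
          ENNReal.add_lt_add_of_le_of_lt (ne_top_of_le_ne_top ENNReal.ofReal_ne_top hδ2)
            hδ2 hn
      _ = ENNReal.ofReal ε := by
          rw [← ENNReal.ofReal_add (by positivity) (by positivity)]
          norm_num
  rw [← enorm_eq_nnnorm, ← ofReal_norm_eq_enorm] at hfin
  exact (ENNReal.ofReal_lt_ofReal_iff hε).1 hfin
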